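/- arXiv:2210.03491 — 8 statements merged into one kernel-verified Lean document; each statement's English description precedes it below -/
import Mathlib

section
/- Let V be a 3-dimensional vector space over a field k, ω a nonzero alternating trilinear form on V, and ω_{xy}(v) = ω(x,y,v). Then for all x, y, z, u, v ∈ V one has (ω_{xy} ∧ ω_{xz})(u,v) = ω(x,y,z) · ω(x,u,v), where (f ∧ g)(u,v) = f(u)g(v) − f(v)g(u). -/
open Module

theorem stmt3 (k V : Type*) [Field k] [AddCommGroup V] [Module k V]
    [FiniteDimensional k V] (hdim : finrank k V = 3)
    (ω : V [⋀^Fin 3]→ₗ[k] k) (hω : ω ≠ 0) (x y z u v : V) :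
    ω ![x, y, u] * ω ![x, z, v] - ω ![x, y, v] * ω ![x, z, u]
      = ω ![x, y, z] * ω ![x, u, v] := by
  have b : Basis (Fin 3) k V := finBasisOfFinrankEq k V hdim
  have hrw : ∀ a c d : V, ω ![a, c, d] = ω ⇑b * b.det ![a, c, d] := by
    intro a c d
    conv_lhs => rw [ω.eq_smul_basis_det b]
    simp [AlternatingMap.smul_apply, smul_eq_mul]
  simp only [hrw]
  simp only [Basis.det_apply, Matrix.det_fin_three, Basis.toMatrix_apply,
    Matrix.cons_val_zero, Matrix.cons_val_one, Matrix.head_cons,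
    Matrix.cons_val_two, Matrix.tail_cons]
  ring
end

section
/- Let V be a 3-dimensional vector space over a field k, g a symmetric bilinear form on V, a, b ∈ V, and T : V → V the operator Tv = g(b,v)a − g(a,v)b. Then the second coefficient c₂(T) of the characteristic polynomial of T (the sum of principal 2×2 minors) equals Δ = g(a,a)g(b,b) − g(a,b)². -/
/-!
`T` factors through `k²` as `v ↦ (g(b,v), -g(a,v))` followed by `(s,t) ↦ s • a + t • b`,
and swapping the two factors changes the characteristic polynomial only by a power of `X`. Hence
`χ_T = X ^ (n - 2) * χ_S` for the `2 × 2` matrix `S = [[g(b,a), g(b,b)], [-g(a,a), -g(a,b)]]`,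
and for `n = 3` the coefficient of `X` in `χ_T` is `det S`, which equals `Δ` since `g` is symmetric.
-/

open Module Polynomial

namespace LinearMap

variable {R M N : Type*} [CommRing R] [Nontrivial R] [AddCommGroup M] [Module R M]
  [Module.Free R M] [Module.Finite R M] [AddCommGroup N] [Module R N] [Module.Free R N]
  [Module.Finite R N]

theorem X_pow_mul_charpoly_comp_comm (f : M →ₗ[R] N) (h : N →ₗ[R] M) :
    X ^ finrank R N * (h ∘ₗ f).charpoly = X ^ finrank R M * (f ∘ₗ h).charpoly := by
  let bM := Free.chooseBasis R M
  let bN := Free.chooseBasis R N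
  rw [← charpoly_toMatrix (h ∘ₗ f) bM, ← charpoly_toMatrix (f ∘ₗ h) bN,
    toMatrix_comp bM bN bM, toMatrix_comp bN bM bN, finrank_eq_card_chooseBasisIndex,
    finrank_eq_card_chooseBasisIndex, Matrix.charpoly_mul_comm']

theorem X_pow_mul_charpoly_of_eq_sum_smul {m : Type*} [Fintype m] [DecidableEq m]
    (T : M →ₗ[R] M) (u : m → M) (φ : m → Dual R M) (hT : ∀ v, T v = ∑ j, φ j v • u j) :
    X ^ Fintype.card m * T.charpoly =
      X ^ finrank R M * (Matrix.of fun i j => φ i (u j)).charpoly := by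
  have hT_comp : T = Fintype.linearCombination R u ∘ₗ pi φ := by
    ext v
    simp [hT, Fintype.linearCombination_apply]
  have hmat : toMatrix' (pi φ ∘ₗ Fintype.linearCombination R u) =
      Matrix.of fun i j => φ i (u j) := by
    ext i j
    simp [Fintype.linearCombination_apply, Pi.single_apply]
  rw [hT_comp, ← finrank_fintype_fun_eq_card R, X_pow_mul_charpoly_comp_comm, ← hmat,
    ← toMatrix_eq_toMatrix', charpoly_toMatrix]

theorem BilinForm.X_sq_mul_charpoly_of_eq_smul_sub_smul (g : LinearMap.BilinForm R M)
    (a b : M) (T : M →ₗ[R] M) (hT : ∀ v, T v = g b v • a - g a v • b) :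
    X ^ 2 * T.charpoly = X ^ finrank R M *
      (X ^ 2 - C (g b a - g a b) * X + C (g a a * g b b - g a b * g b a)) := by
  have hT_sum : ∀ v, T v = ∑ j, ![g b, -g a] j v • ![a, b] j := by
    simp [hT, sub_eq_add_neg]
  have hmat : (Matrix.of fun i j => ![g b, -g a] i (![a, b] j)) =
      !![g b a, g b b; -(g a a), -(g a b)] := by
    ext i j
    fin_cases i <;> fin_cases j <;> simp
  rw [← Fintype.card_fin 2, X_pow_mul_charpoly_of_eq_sum_smul T _ _ hT_sum, hmat,
    Fintype.card_fin, Matrix.charpoly_fin_two, Matrix.trace_fin_two_of, Matrix.det_fin_two_of,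
    ← sub_eq_add_neg]
  congr 3
  ring

end LinearMap

theorem stmt5 (k V : Type*) [Field k] [AddCommGroup V] [Module k V]
    [FiniteDimensional k V] (hdim : finrank k V = 3)
    (g : LinearMap.BilinForm k V) (hg : g.IsSymm) (a b : V)
    (T : V →ₗ[k] V) (hT : ∀ v, T v = g b v • a - g a v • b) :
    (LinearMap.charpoly T).coeff 1 = g a a * g b b - g a b ^ 2 := by
  have h := congrArg (coeff · 3) (g.X_sq_mul_charpoly_of_eq_smul_sub_smul a b T hT)
  simp only [hdim, coeff_X_pow_mul'] at h
  simpa [hg.eq b a, sq, coeff_X, coeff_C] using h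
end

section
/- Let V be a 3-dimensional vector space over a field k of characteristic ≠ 2, ω a nonzero alternating trilinear form, a, b ∈ V with l := ω_{ab} (i.e. l(v) = ω(a,b,v)), g a symmetric bilinear form on V, and T the operator Tv = g(b,v)a − g(a,v)b. Then for all x, y, z ∈ V: g(x,z)l(y) − g(y,z)l(x) = ω(x,y,Tz). -/
open Module

section Helpers

variable {k V : Type*} [Field k] [AddCommGroup V] [Module k V]

private lemma upd0' (u w t x : V) : Function.update ![x, u, w] 0 t = ![t, u, w] := by
  funext i; fin_cases i <;> simp
private lemma upd1' (u w t x : V) : Function.update ![u, x, w] 1 t = ![u, t, w] := by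
  funext i; fin_cases i <;> simp
private lemma upd2' (u w t x : V) : Function.update ![u, w, x] 2 t = ![u, w, t] := by
  funext i; fin_cases i <;> simp

lemma omega_add0 (ω : V [⋀^Fin 3]→ₗ[k] k) (u w x y : V) :
    ω ![x + y, u, w] = ω ![x, u, w] + ω ![y, u, w] := by
  have := ω.map_update_add ![x, u, w] 0 x y
  simpa [upd0'] using this
lemma omega_add1 (ω : V [⋀^Fin 3]→ₗ[k] k) (u w x y : V) :
    ω ![u, x + y, w] = ω ![u, x, w] + ω ![u, y, w] := by
  have := ω.map_update_add ![u, x, w] 1 x y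
  simpa [upd1'] using this
lemma omega_add2 (ω : V [⋀^Fin 3]→ₗ[k] k) (u w x y : V) :
    ω ![u, w, x + y] = ω ![u, w, x] + ω ![u, w, y] := by
  have := ω.map_update_add ![u, w, x] 2 x y
  simpa [upd2'] using this
lemma omega_sub2 (ω : V [⋀^Fin 3]→ₗ[k] k) (u w x y : V) :
    ω ![u, w, x - y] = ω ![u, w, x] - ω ![u, w, y] := by
  have := ω.toMultilinearMap.map_update_sub ![u, w, x] 2 x y
  simpa [upd2'] using this
lemma omega_smul0 (ω : V [⋀^Fin 3]→ₗ[k] k) (u w : V) (c : k) (x : V) :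
    ω ![c • x, u, w] = c * ω ![x, u, w] := by
  have := ω.map_update_smul ![x, u, w] 0 c x
  simpa [upd0'] using this
lemma omega_smul1 (ω : V [⋀^Fin 3]→ₗ[k] k) (u w : V) (c : k) (x : V) :
    ω ![u, c • x, w] = c * ω ![u, x, w] := by
  have := ω.map_update_smul ![u, x, w] 1 c x
  simpa [upd1'] using this
lemma omega_smul2 (ω : V [⋀^Fin 3]→ₗ[k] k) (u w : V) (c : k) (x : V) :
    ω ![u, w, c • x] = c * ω ![u, w, x] := by
  have := ω.map_update_smul ![u, w, x] 2 c x
  simpa [upd2'] using this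

lemma omega_swap01 (ω : V [⋀^Fin 3]→ₗ[k] k) (u v w : V) : ω ![v, u, w] = -ω ![u, v, w] := by
  have := ω.map_swap (v := ![u, v, w]) (i := 0) (j := 1) (by decide)
  rw [← this]; congr 1; funext i; fin_cases i <;> simp [Equiv.swap_apply_def]

lemma omega_swap12 (ω : V [⋀^Fin 3]→ₗ[k] k) (u v w : V) : ω ![u, w, v] = -ω ![u, v, w] := by
  have := ω.map_swap (v := ![u, v, w]) (i := 1) (j := 2) (by decide)
  rw [← this]; congr 1; funext i; fin_cases i <;> simp [Equiv.swap_apply_def]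

lemma omega_swap02 (ω : V [⋀^Fin 3]→ₗ[k] k) (u v w : V) : ω ![w, v, u] = -ω ![u, v, w] := by
  have := ω.map_swap (v := ![u, v, w]) (i := 0) (j := 2) (by decide)
  rw [← this]; congr 1; funext i; fin_cases i <;> simp [Equiv.swap_apply_def]

lemma omega_zero01 (ω : V [⋀^Fin 3]→ₗ[k] k) (u w : V) : ω ![u, u, w] = 0 :=
  ω.map_eq_zero_of_eq _ (i := 0) (j := 1) rfl (by decide)
lemma omega_zero02 (ω : V [⋀^Fin 3]→ₗ[k] k) (u w : V) : ω ![u, w, u] = 0 :=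
  ω.map_eq_zero_of_eq _ (i := 0) (j := 2) rfl (by decide)
lemma omega_zero12 (ω : V [⋀^Fin 3]→ₗ[k] k) (u w : V) : ω ![w, u, u] = 0 :=
  ω.map_eq_zero_of_eq _ (i := 1) (j := 2) rfl (by decide)

/-- The wedge of a linear functional with an alternating 3-form, as an alternating 4-form. -/
def wedge1 (φ : Module.Dual k V) (ω : V [⋀^Fin 3]→ₗ[k] k) : V [⋀^Fin 4]→ₗ[k] k where
  toFun v := φ (v 0) * ω ![v 1, v 2, v 3] - φ (v 1) * ω ![v 0, v 2, v 3]
    + φ (v 2) * ω ![v 0, v 1, v 3] - φ (v 3) * ω ![v 0, v 1, v 2]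
  map_update_add' := by
    intro dec v i x y
    fin_cases i <;>
      simp +decide [Function.update_apply, Fin.ext_iff, map_add,
        omega_add0, omega_add1, omega_add2] <;> ring
  map_update_smul' := by
    intro dec v i c x
    fin_cases i <;>
      simp +decide [Function.update_apply, Fin.ext_iff, map_smul, smul_eq_mul,
        omega_smul0, omega_smul1, omega_smul2] <;> ring
  map_eq_zero_of_eq' := by
    intro v i j h hij
    fin_cases i <;> fin_cases j <;> simp_all
    · linear_combination φ (v 2) * omega_zero01 ω (v 1) (v 3)
        - φ (v 3) * omega_zero01 ω (v 1) (v 2)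
    · linear_combination -φ (v 1) * omega_zero01 ω (v 2) (v 3)
        + φ (v 2) * omega_swap01 ω (v 1) (v 2) (v 3) - φ (v 3) * omega_zero02 ω (v 2) (v 1)
    · linear_combination -φ (v 1) * omega_zero02 ω (v 3) (v 2)
        + φ (v 2) * omega_zero02 ω (v 3) (v 1)
        - φ (v 3) * omega_swap02 ω (v 2) (v 1) (v 3)
        + φ (v 3) * omega_swap01 ω (v 1) (v 2) (v 3)
    · linear_combination φ (v 2) * omega_zero01 ω (v 0) (v 3)
        - φ (v 3) * omega_zero01 ω (v 0) (v 2)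
    · linear_combination φ (v 0) * omega_zero01 ω (v 2) (v 3)
        - φ (v 3) * omega_zero12 ω (v 2) (v 0)
    · linear_combination φ (v 0) * omega_zero02 ω (v 3) (v 2)
        + φ (v 2) * omega_zero12 ω (v 3) (v 0)
        - φ (v 3) * omega_swap12 ω (v 0) (v 2) (v 3)
    · linear_combination φ (v 0) * omega_swap01 ω (v 0) (v 1) (v 3)
        - φ (v 1) * omega_zero01 ω (v 0) (v 3) - φ (v 3) * omega_zero02 ω (v 0) (v 1)
    · linear_combination φ (v 0) * omega_zero01 ω (v 1) (v 3)
        - φ (v 3) * omega_zero12 ω (v 1) (v 0)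
    · linear_combination φ (v 0) * omega_zero12 ω (v 3) (v 1)
        - φ (v 1) * omega_zero12 ω (v 3) (v 0)
    · linear_combination φ (v 0) * omega_swap02 ω (v 0) (v 2) (v 1)
        - φ (v 0) * omega_swap12 ω (v 0) (v 1) (v 2)
        - φ (v 1) * omega_zero02 ω (v 0) (v 2) + φ (v 2) * omega_zero02 ω (v 0) (v 1)
    · linear_combination φ (v 0) * omega_zero02 ω (v 1) (v 2)
        - φ (v 1) * omega_swap12 ω (v 0) (v 1) (v 2) + φ (v 2) * omega_zero12 ω (v 1) (v 0)
    · linear_combination φ (v 0) * omega_zero12 ω (v 2) (v 1)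
        - φ (v 1) * omega_zero12 ω (v 2) (v 0)

lemma wedge1_apply (φ : Module.Dual k V) (ω : V [⋀^Fin 3]→ₗ[k] k) (v : Fin 4 → V) :
    wedge1 φ ω v = φ (v 0) * ω ![v 1, v 2, v 3] - φ (v 1) * ω ![v 0, v 2, v 3]
      + φ (v 2) * ω ![v 0, v 1, v 3] - φ (v 3) * ω ![v 0, v 1, v 2] := rfl

lemma wedge1_eq_zero [FiniteDimensional k V] (hdim : finrank k V = 3)
    (φ : Module.Dual k V) (ω : V [⋀^Fin 3]→ₗ[k] k) (v : Fin 4 → V) :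
    wedge1 φ ω v = 0 := by
  refine AlternatingMap.map_linearDependent _ v (fun h => ?_)
  have := h.fintype_card_le_finrank
  simp [hdim] at this

end Helpers

theorem stmt9 (k V : Type*) [Field k] [AddCommGroup V] [Module k V]
    [FiniteDimensional k V] (hdim : finrank k V = 3) (hchar : (2 : k) ≠ 0)
    (ω : V [⋀^Fin 3]→ₗ[k] k) (hω : ω ≠ 0)
    (a b : V) (l : Module.Dual k V) (hl : ∀ v, l v = ω ![a, b, v])
    (g : LinearMap.BilinForm k V) (hg : g.IsSymm)
    (T : V →ₗ[k] V) (hT : ∀ v, T v = g b v • a - g a v • b) :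
    ∀ x y z : V, g x z * l y - g y z * l x = ω ![x, y, T z] := by
  intro x y z
  have hw : g x z * ω ![y, a, b] - g y z * ω ![x, a, b]
      + g a z * ω ![x, y, b] - g b z * ω ![x, y, a] = 0 := by
    have h0 := wedge1_eq_zero hdim (g.flip z) ω ![x, y, a, b]
    rw [wedge1_apply] at h0
    simpa using h0
  rw [hl, hl, hT, omega_sub2, omega_smul2, omega_smul2]
  linear_combination hw - g x z * omega_swap01 ω a y b + g x z * omega_swap12 ω a y b
    + g y z * omega_swap01 ω a x b - g y z * omega_swap12 ω a x b
end

section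
/- Let V be a 3-dimensional vector space over a field k of characteristic ≠ 2, ω a nonzero alternating trilinear form, a, b ∈ V, l(v) = ω(a,b,v), g a symmetric bilinear form with Δ = g(a,a)g(b,b) − g(a,b)², T the operator Tv = g(b,v)a − g(a,v)b, q ∈ k, and T' = T + ((q+1)/2)·Id. Then the identity g(x,T'u)l(v) − g(x,T'v)l(u) + ω(x,T'u,T'v) = q·ω(x,u,v) holds for all x, u, v ∈ V if and only if (q+1)²/4 + Δ = q, equivalently (q−1)² = −4Δ. -/
/-!
Expanding `T' = T + c • id` with `c = (q + 1) / 2`, the left-hand side of the identity is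
`(c ^ 2 + Δ) ω(x, u, v)`: the terms linear in `T` cancel and the terms quadratic in `T` give
`Δ ω(x, u, v)`. Both facts are consequences of the single place where `dim V = 3` enters, the
Cramer identity `φ(y₁) ω(y₂,y₃,y₄) - φ(y₂) ω(y₁,y₃,y₄) + φ(y₃) ω(y₁,y₂,y₄) - φ(y₄) ω(y₁,y₂,y₃) = 0`
(an alternating 4-form in dimension 3 vanishes). Since `ω ≠ 0`, the identity then holds exactly
when `c ^ 2 + Δ = q`.
-/

open Module

namespace AlternatingMap

section CommRing

variable {R M N : Type*} [CommRing R] [AddCommGroup M] [Module R M] [AddCommGroup N] [Module R N]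
  (ω : M [⋀^Fin 3]→ₗ[R] N) (x y z : M)

theorem map_vec3_swap_right : ω ![x, z, y] = -ω ![x, y, z] := by
  rw [← ω.map_swap ![x, y, z] (i := 1) (j := 2) (by decide)]
  congr 1
  ext i; fin_cases i <;> rfl

theorem map_vec3_rotate : ω ![y, z, x] = ω ![x, y, z] := by
  rw [← neg_neg (ω ![x, y, z]), ← ω.map_swap ![x, y, z] (i := 0) (j := 1) (by decide),
    ← ω.map_swap _ (i := 1) (j := 2) (by decide)]
  congr 1
  ext i; fin_cases i <;> rfl

theorem map_vec3_eq_zero_of_eq_right : ω ![x, y, y] = 0 :=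
  ω.map_eq_zero_of_eq ![x, y, y] (i := 1) (j := 2) rfl (by decide)

theorem exists_map_vec3_ne_zero (hω : ω ≠ 0) : ∃ x y z : M, ω ![x, y, z] ≠ 0 := by
  obtain ⟨v, hv⟩ : ∃ v, ω v ≠ 0 := by
    by_contra! h
    exact hω (AlternatingMap.ext h)
  refine ⟨v 0, v 1, v 2, ?_⟩
  convert hv
  ext i; fin_cases i <;> rfl

end CommRing

section Field

variable {k V : Type*} [Field k] [AddCommGroup V] [Module k V] (ω : V [⋀^Fin 3]→ₗ[k] k)

theorem cramer_fin_three (hdim : finrank k V = 3) (y₁ y₂ y₃ y₄ : V) :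
    ω ![y₂, y₃, y₄] • y₁ - ω ![y₁, y₃, y₄] • y₂ + ω ![y₁, y₂, y₄] • y₃ - ω ![y₁, y₂, y₃] • y₄
      = 0 := by
  have := Module.finite_of_finrank_eq_succ hdim
  let e := Module.finBasisOfFinrankEq k V hdim
  apply e.repr.injective
  ext i
  rw [ω.eq_smul_basis_det e]
  fin_cases i <;> simp [Basis.det_apply, Matrix.det_fin_three, Basis.toMatrix_apply] <;> ring

theorem cramer_fin_three_apply (hdim : finrank k V = 3) (φ : V →ₗ[k] k) (y₁ y₂ y₃ y₄ : V) :
    φ y₁ * ω ![y₂, y₃, y₄] - φ y₂ * ω ![y₁, y₃, y₄] + φ y₃ * ω ![y₁, y₂, y₄]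
      - φ y₄ * ω ![y₁, y₂, y₃] = 0 := by
  have h := congrArg φ (ω.cramer_fin_three hdim y₁ y₂ y₃ y₄)
  rw [φ.map_zero] at h
  simp only [map_add, map_sub, map_smul, smul_eq_mul] at h
  linear_combination h

end Field

end AlternatingMap

section SkewOperator

variable {k V : Type*} [Field k] [AddCommGroup V] [Module k V]
  (ω : V [⋀^Fin 3]→ₗ[k] k) {g : LinearMap.BilinForm k V} {a b : V} {T : V →ₗ[k] V}

theorem quadratic_terms_eq (hdim : finrank k V = 3) (hg : g.IsSymm)
    (hT : ∀ v, T v = g b v • a - g a v • b) (x u v : V) :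
    g x (T u) * ω ![a, b, v] - g x (T v) * ω ![a, b, u] + ω ![x, T u, T v]
      = (g a a * g b b - g a b ^ 2) * ω ![x, u, v] := by
  rw [hT u, hT v]
  simp only [map_sub, map_smul, smul_eq_mul, ← AlternatingMap.curryLeft_apply_apply,
    AlternatingMap.sub_apply, AlternatingMap.smul_apply]
  simp only [AlternatingMap.curryLeft_apply_apply, ω.map_vec3_eq_zero_of_eq_right,
    ω.map_vec3_swap_right x a b, ← ω.map_vec3_rotate x a b, hg.eq x a, hg.eq x b]
  have R := ω.cramer_fin_three_apply hdim
  linear_combination g b u * R (g a) a b x v - g b v * R (g a) a b x u - g b x * R (g a) a b u v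
    + g a b * R (g b) a x u v - g a a * R (g b) b x u v + g a b * ω ![x, u, v] * hg.eq a b

theorem linear_terms_eq_zero (hdim : finrank k V = 3) (hg : g.IsSymm)
    (hT : ∀ v, T v = g b v • a - g a v • b) (x u v : V) :
    g x u * ω ![a, b, v] - g x v * ω ![a, b, u] + ω ![x, T u, v] + ω ![x, u, T v] = 0 := by
  rw [hT u, hT v]
  simp only [map_sub, map_smul, smul_eq_mul, ← AlternatingMap.curryLeft_apply_apply,
    AlternatingMap.sub_apply, AlternatingMap.smul_apply]
  simp only [AlternatingMap.curryLeft_apply_apply, ω.map_vec3_swap_right x a u,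
    ω.map_vec3_swap_right x b u]
  have R₁ := ω.cramer_fin_three_apply hdim (g u) x a b v
  have R₂ := ω.cramer_fin_three_apply hdim (g v) x a b u
  rw [hg.eq u x, hg.eq u a, hg.eq u b] at R₁
  rw [hg.eq v x, hg.eq v a, hg.eq v b] at R₂
  linear_combination R₁ - R₂ + ω ![x, a, b] * hg.eq u v

theorem shifted_identity (hdim : finrank k V = 3) (hg : g.IsSymm)
    (hT : ∀ v, T v = g b v • a - g a v • b) (c : k) {T' : V →ₗ[k] V}
    (hT' : ∀ v, T' v = T v + c • v) (x u v : V) :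
    g x (T' u) * ω ![a, b, v] - g x (T' v) * ω ![a, b, u] + ω ![x, T' u, T' v]
      = (c ^ 2 + (g a a * g b b - g a b ^ 2)) * ω ![x, u, v] := by
  rw [hT' u, hT' v]
  simp only [map_add, map_smul, smul_eq_mul, ← AlternatingMap.curryLeft_apply_apply,
    AlternatingMap.add_apply, AlternatingMap.smul_apply]
  simp only [AlternatingMap.curryLeft_apply_apply]
  linear_combination quadratic_terms_eq ω hdim hg hT x u v
    + c * linear_terms_eq_zero ω hdim hg hT x u v

end SkewOperator

theorem add_one_sq_div_four_add_eq_iff {k : Type*} [Field k] (hchar : (2 : k) ≠ 0) (q Δ : k) :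
    (q + 1) ^ 2 / 4 + Δ = q ↔ (q - 1) ^ 2 = -(4 * Δ) := by
  have h4 : (4 : k) ≠ 0 := by
    simpa [show (4 : k) = 2 * 2 by norm_num] using mul_ne_zero hchar hchar
  constructor <;> intro h
  · field_simp at h
    linear_combination h
  · field_simp
    linear_combination h

theorem stmt10_general (k V : Type*) [Field k] [AddCommGroup V] [Module k V]
    (hdim : finrank k V = 3) (hchar : (2 : k) ≠ 0)
    (ω : V [⋀^Fin 3]→ₗ[k] k) (hω : ω ≠ 0)
    (a b : V) (l : Module.Dual k V) (hl : ∀ v, l v = ω ![a, b, v])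
    (g : LinearMap.BilinForm k V) (hg : g.IsSymm)
    (Δ : k) (hΔ : Δ = g a a * g b b - g a b ^ 2)
    (T : V →ₗ[k] V) (hT : ∀ v, T v = g b v • a - g a v • b)
    (q : k) (T' : V →ₗ[k] V) (hT' : ∀ v, T' v = T v + ((q + 1) / 2) • v) :
    ((∀ x u v : V,
        g x (T' u) * l v - g x (T' v) * l u + ω ![x, T' u, T' v]
          = q * ω ![x, u, v])
      ↔ (q + 1) ^ 2 / 4 + Δ = q)
    ∧ ((q + 1) ^ 2 / 4 + Δ = q ↔ (q - 1) ^ 2 = -(4 * Δ)) := by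
  have key (x u v : V) :
      g x (T' u) * l v - g x (T' v) * l u + ω ![x, T' u, T' v]
        = ((q + 1) ^ 2 / 4 + Δ) * ω ![x, u, v] := by
    rw [hl, hl, shifted_identity ω hdim hg hT _ hT', hΔ, div_pow]
    norm_num
  refine ⟨⟨fun h => ?_, fun h x u v => by rw [key, h]⟩, add_one_sq_div_four_add_eq_iff hchar q Δ⟩
  obtain ⟨x, u, v, hne⟩ := ω.exists_map_vec3_ne_zero hω
  exact mul_right_cancel₀ hne ((key x u v).symm.trans (h x u v))

theorem stmt10 (k V : Type*) [Field k] [AddCommGroup V] [Module k V]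
    [FiniteDimensional k V] (hdim : finrank k V = 3) (hchar : (2 : k) ≠ 0)
    (ω : V [⋀^Fin 3]→ₗ[k] k) (hω : ω ≠ 0)
    (a b : V) (l : Module.Dual k V) (hl : ∀ v, l v = ω ![a, b, v])
    (g : LinearMap.BilinForm k V) (hg : g.IsSymm)
    (Δ : k) (hΔ : Δ = g a a * g b b - g a b ^ 2)
    (T : V →ₗ[k] V) (hT : ∀ v, T v = g b v • a - g a v • b)
    (q : k) (T' : V →ₗ[k] V) (hT' : ∀ v, T' v = T v + ((q + 1) / 2) • v) :
    ((∀ x u v : V,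
        g x (T' u) * l v - g x (T' v) * l u + ω ![x, T' u, T' v]
          = q * ω ![x, u, v])
      ↔ (q + 1) ^ 2 / 4 + Δ = q)
    ∧ ((q + 1) ^ 2 / 4 + Δ = q ↔ (q - 1) ^ 2 = -(4 * Δ)) :=
  stmt10_general k V hdim hchar ω hω a b l hl g hg Δ hΔ T hT q T' hT'
end

section
/- Let V be a 3-dimensional vector space over a field k of characteristic ≠ 2 and let φ : V → V* be a map that is homogeneous polynomial of degree 2 (i.e., x ↦ ℓ_{xx} for a bilinear ℓ) such that φ(x) ∧ φ(y) = 0 for all x, y ∈ V (all values pairwise proportional). Then there exist a fixed linear form l ∈ V* and a symmetric bilinear form g on V such that φ(x) = g(x,x)·l for all x ∈ V. -/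
/-!
Pairwise proportional linear forms that are not all zero are multiples of a single form `l`,
normalized by `l u = 1`; then `φ x = (φ x u) • l`. Since `x ↦ ℓ x x u` is a quadratic form and `2`
is invertible, it is the diagonal of its polarization, which is the symmetric form `g`.
-/

open Module

theorem Module.Dual.eq_smul_of_mul_comm {k M : Type*} [Field k] [AddCommGroup M] [Module k M]
    {f l : Dual k M} {u : M} (h : ∀ v, f u * l v = f v * l u) (hu : l u = 1) :
    f = f u • l := by
  ext v
  simpa [hu] using (h v).symm

theorem Module.Dual.exists_forall_eq_smul_of_mul_comm {k M X : Type*} [Field k] [AddCommGroup M]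
    [Module k M] (φ : X → Dual k M) (h : ∀ x y u v, φ x u * φ y v = φ x v * φ y u) :
    ∃ (l : Dual k M) (u : M), ∀ x, φ x = φ x u • l := by
  by_cases hφ : ∀ x, φ x = 0
  · exact ⟨0, 0, fun x => by simp [hφ x]⟩
  push Not at hφ
  obtain ⟨x₀, hx₀⟩ := hφ
  obtain ⟨u, hu⟩ := DFunLike.ne_iff.mp hx₀
  refine ⟨(φ x₀ u)⁻¹ • φ x₀, u, fun x => eq_smul_of_mul_comm (fun v => ?_) (inv_mul_cancel₀ hu)⟩
  simp only [LinearMap.smul_apply, smul_eq_mul]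
  linear_combination (φ x₀ u)⁻¹ * h x x₀ u v

theorem stmt12_general (k V : Type*) [Field k] [AddCommGroup V] [Module k V]
    (hchar : (2 : k) ≠ 0)
    (ℓ : V →ₗ[k] V →ₗ[k] Module.Dual k V)
    (hprop : ∀ x y u v : V, ℓ x x u * ℓ y y v = ℓ x x v * ℓ y y u) :
    ∃ (l : Module.Dual k V) (g : LinearMap.BilinForm k V), g.IsSymm ∧
      ∀ x : V, ℓ x x = g x x • l := by
  obtain ⟨l, u, hl⟩ := Dual.exists_forall_eq_smul_of_mul_comm (fun x => ℓ x x) hprop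
  have : Invertible (2 : k) := invertibleOfNonzero hchar
  let Q : QuadraticForm k V := LinearMap.BilinMap.toQuadraticMap (ℓ.compr₂ (LinearMap.applyₗ u))
  refine ⟨l, QuadraticMap.associated Q, ⟨QuadraticMap.associated_isSymm k Q⟩, fun x => ?_⟩
  rw [QuadraticMap.associated_eq_self_apply]
  exact hl x

theorem stmt12 (k V : Type*) [Field k] [AddCommGroup V] [Module k V]
    [FiniteDimensional k V] (hdim : finrank k V = 3) (hchar : (2 : k) ≠ 0)
    (ℓ : V →ₗ[k] V →ₗ[k] Module.Dual k V)
    (hprop : ∀ x y u v : V, ℓ x x u * ℓ y y v = ℓ x x v * ℓ y y u) :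
    ∃ (l : Module.Dual k V) (g : LinearMap.BilinForm k V), g.IsSymm ∧
      ∀ x : V, ℓ x x = g x x • l :=
  stmt12_general k V hchar ℓ hprop
end

section
/- Let V be a 3-dimensional vector space over a field k of characteristic ≠ 2, q ∈ k nonzero, a, b ∈ V, g a symmetric bilinear form on V with (q−1)² = −4(g(a,a)g(b,b) − g(a,b)²), T the operator Tv = g(b,v)a − g(a,v)b, and Y : V⊗V → V⊗V defined by Y(x⊗y) = g(x,y)(a⊗b − b⊗a) + (x⊗Ty − Ty⊗x) + (y⊗Tx − Tx⊗y) + ((q+1)/2)(x⊗y − y⊗x). Then Y(w) = (q+1)w for every alternating tensor w ∈ V⊗V (i.e., for w = x⊗y − y⊗x), and the image of Y is contained in the space of alternating 2-tensors. -/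
open Module TensorProduct

/-! `Y (x ⊗ y)` is an expression symmetric in `x, y` plus `((q + 1) / 2) • (x ⊗ y - y ⊗ x)`,
so on `x ⊗ y - y ⊗ x` the symmetric part cancels and the two copies of `(q + 1) / 2` add up
to `q + 1`. -/

namespace TensorProduct

variable {R M N P : Type*} [CommRing R] [AddCommGroup M] [Module R M]
  [AddCommGroup N] [Module R N] [AddCommGroup P] [Module R P]

theorem range_le_of_forall_tmul_mem (f : M ⊗[R] N →ₗ[R] P) (S : Submodule R P)
    (hf : ∀ x y, f (x ⊗ₜ y) ∈ S) : LinearMap.range f ≤ S := by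
  rw [LinearMap.range_eq_map, ← span_tmul_eq_top, Submodule.map_span_le]
  rintro _ ⟨x, y, rfl⟩
  exact hf x y

def alternatingTensors (R M : Type*) [CommRing R] [AddCommGroup M] [Module R M] :
    Submodule R (M ⊗[R] M) :=
  Submodule.span R {w | ∃ x y : M, w = x ⊗ₜ y - y ⊗ₜ x}

theorem tmul_sub_tmul_mem_alternatingTensors (x y : M) :
    x ⊗ₜ y - y ⊗ₜ x ∈ alternatingTensors R M :=
  Submodule.subset_span ⟨x, y, rfl⟩

theorem map_tmul_sub_tmul_of_symm_add_smul (f : M ⊗[R] M →ₗ[R] M ⊗[R] M)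
    (s : M → M → M ⊗[R] M) (hs : ∀ x y, s x y = s y x) (c : R)
    (hf : ∀ x y, f (x ⊗ₜ y) = s x y + c • (x ⊗ₜ[R] y - y ⊗ₜ x)) (x y : M) :
    f (x ⊗ₜ y - y ⊗ₜ x) = (2 * c) • (x ⊗ₜ[R] y - y ⊗ₜ x) := by
  rw [map_sub, hf, hf, hs y x]
  module

end TensorProduct

theorem stmt13_general (k V : Type*) [Field k] [AddCommGroup V] [Module k V]
    (hchar : (2 : k) ≠ 0)
    (q : k) (a b : V)
    (g : LinearMap.BilinForm k V) (hg : g.IsSymm)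
    (T : V →ₗ[k] V)
    (Y : V ⊗[k] V →ₗ[k] V ⊗[k] V)
    (hY : ∀ x y : V, Y (x ⊗ₜ y) =
      g x y • (a ⊗ₜ b - b ⊗ₜ a) + (x ⊗ₜ T y - T y ⊗ₜ x)
        + (y ⊗ₜ T x - T x ⊗ₜ y) + ((q + 1) / 2) • (x ⊗ₜ y - y ⊗ₜ x)) :
    (∀ x y : V, Y (x ⊗ₜ y - y ⊗ₜ x) = (q + 1) • (x ⊗ₜ y - y ⊗ₜ x)) ∧
    LinearMap.range Y ≤ Submodule.span k
      {w : V ⊗[k] V | ∃ x y : V, w = x ⊗ₜ y - y ⊗ₜ x} := by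
  constructor
  · intro x y
    have h := map_tmul_sub_tmul_of_symm_add_smul Y
      (fun x y ↦ g x y • (a ⊗ₜ b - b ⊗ₜ a) + (x ⊗ₜ T y - T y ⊗ₜ x)
        + (y ⊗ₜ T x - T x ⊗ₜ y))
      (fun x y ↦ by rw [hg.eq x y, add_assoc, add_assoc, add_comm (x ⊗ₜ T y - _)])
      ((q + 1) / 2) hY x y
    rwa [mul_div_cancel₀ _ hchar] at h
  · refine range_le_of_forall_tmul_mem Y (alternatingTensors k V) fun x y ↦ ?_
    rw [hY]
    exact add_mem (add_mem (add_mem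
      (Submodule.smul_mem _ _ (tmul_sub_tmul_mem_alternatingTensors a b))
      (tmul_sub_tmul_mem_alternatingTensors x (T y)))
      (tmul_sub_tmul_mem_alternatingTensors y (T x)))
      (Submodule.smul_mem _ _ (tmul_sub_tmul_mem_alternatingTensors x y))

theorem stmt13 (k V : Type*) [Field k] [AddCommGroup V] [Module k V]
    [FiniteDimensional k V] (hdim : finrank k V = 3) (hchar : (2 : k) ≠ 0)
    (q : k) (hq : q ≠ 0) (a b : V)
    (g : LinearMap.BilinForm k V) (hg : g.IsSymm)
    (hΔ : (q - 1) ^ 2 = -(4 * (g a a * g b b - g a b ^ 2)))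
    (T : V →ₗ[k] V) (hT : ∀ v, T v = g b v • a - g a v • b)
    (Y : V ⊗[k] V →ₗ[k] V ⊗[k] V)
    (hY : ∀ x y : V, Y (x ⊗ₜ y) =
      g x y • (a ⊗ₜ b - b ⊗ₜ a) + (x ⊗ₜ T y - T y ⊗ₜ x)
        + (y ⊗ₜ T x - T x ⊗ₜ y) + ((q + 1) / 2) • (x ⊗ₜ y - y ⊗ₜ x)) :
    (∀ x y : V, Y (x ⊗ₜ y - y ⊗ₜ x) = (q + 1) • (x ⊗ₜ y - y ⊗ₜ x)) ∧
    LinearMap.range Y ≤ Submodule.span k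
      {w : V ⊗[k] V | ∃ x y : V, w = x ⊗ₜ y - y ⊗ₜ x} :=
  stmt13_general k V hchar q a b g hg T Y hY
end

section
/- Let V be a 3-dimensional vector space over a field k of characteristic ≠ 2, q ∈ k nonzero, a, b ∈ V, g a symmetric bilinear form with (q−1)² = −4(g(a,a)g(b,b) − g(a,b)²), T as above, Y the operator of Proposition 3.1, and R = q·Id_{V⊗V} − Y. Then R satisfies the Hecke relation (R − q·Id)(R + Id) = 0. -/
/-!
Let `τ` be the flip of `V ⊗ V`. Every term of `Y (x ⊗ y)` is antisymmetric, so `τ ∘ Y = -Y`;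
and on antisymmetric tensors the `g`- and `T`-terms of `Y` cancel, leaving
`Y (x ⊗ y - y ⊗ x) = (q + 1) • (x ⊗ y - y ⊗ x)`. Hence `Y` is `q + 1` times an idempotent,
`Y ∘ Y = (q + 1) • Y`, which for `R = q - Y` is exactly the Hecke relation.
-/

open Module TensorProduct

theorem mul_self_eq_smul_of_mul_sub_eq_smul {k A : Type*} [Field k] [Ring A] [Algebra k A]
    (h2 : (2 : k) ≠ 0) {τ Y : A} {c : k}
    (hτY : τ * Y = -Y) (hYτ : Y * (1 - τ) = c • (1 - τ)) : Y * Y = c • Y := by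
  have hY : (1 - τ) * Y = (2 : k) • Y := by rw [sub_mul, hτY, one_mul, sub_neg_eq_add, two_smul]
  apply smul_right_injective A h2
  calc (2 : k) • (Y * Y) = Y * ((1 - τ) * Y) := by rw [hY, mul_smul_comm]
    _ = (2 : k) • (c • Y) := by rw [← mul_assoc, hYτ, smul_mul_assoc, hY, smul_comm]

theorem hecke_of_mul_self_eq_smul {k A : Type*} [CommRing k] [Ring A] [Algebra k A] {q : k}
    {Y : A} (hY : Y * Y = (q + 1) • Y) : (q • 1 - Y - q • 1) * (q • 1 - Y + 1) = 0 := by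
  rw [sub_sub_cancel_left, neg_mul, mul_add, mul_sub, mul_smul_comm, mul_one, hY,
    add_smul, one_smul]
  abel

section Flip

variable {k V : Type*} [Field k] [AddCommGroup V] [Module k V] {q : k} {a b : V}
  {g : LinearMap.BilinForm k V} {T : V →ₗ[k] V} {Y : V ⊗[k] V →ₗ[k] V ⊗[k] V}

theorem comm_comp_eq_neg_of_apply_tmul
    (hY : ∀ x y : V, Y (x ⊗ₜ y) =
      g x y • (a ⊗ₜ b - b ⊗ₜ a) + (x ⊗ₜ T y - T y ⊗ₜ x)
        + (y ⊗ₜ T x - T x ⊗ₜ y) + ((q + 1) / 2) • (x ⊗ₜ y - y ⊗ₜ x)) :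
    (TensorProduct.comm k V V).toLinearMap ∘ₗ Y = -Y := by
  refine TensorProduct.ext' fun x y => ?_
  simp only [LinearMap.comp_apply,
    LinearMap.neg_apply, LinearEquiv.coe_coe, hY, map_add, map_sub, map_smul, comm_tmul]
  module

theorem comp_sub_comm_eq_smul_of_apply_tmul (hchar : (2 : k) ≠ 0) (hg : g.IsSymm)
    (hY : ∀ x y : V, Y (x ⊗ₜ y) =
      g x y • (a ⊗ₜ b - b ⊗ₜ a) + (x ⊗ₜ T y - T y ⊗ₜ x)
        + (y ⊗ₜ T x - T x ⊗ₜ y) + ((q + 1) / 2) • (x ⊗ₜ y - y ⊗ₜ x)) :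
    Y ∘ₗ (LinearMap.id - (TensorProduct.comm k V V).toLinearMap) =
      (q + 1) • (LinearMap.id - (TensorProduct.comm k V V).toLinearMap) := by
  refine TensorProduct.ext' fun x y => ?_
  have hs : g y x = g x y := by simpa using hg.eq y x
  simp only [LinearMap.comp_apply,
    LinearMap.sub_apply, LinearMap.smul_apply, LinearMap.id_apply, LinearEquiv.coe_coe,
    comm_tmul, map_sub, hY, hs]
  match_scalars <;> field_simp <;> ring

end Flip

theorem stmt14_general (k V : Type*) [Field k] [AddCommGroup V] [Module k V]
    (hchar : (2 : k) ≠ 0)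
    (q : k) (a b : V)
    (g : LinearMap.BilinForm k V) (hg : g.IsSymm)
    (T : V →ₗ[k] V)
    (Y : V ⊗[k] V →ₗ[k] V ⊗[k] V)
    (hY : ∀ x y : V, Y (x ⊗ₜ y) =
      g x y • (a ⊗ₜ b - b ⊗ₜ a) + (x ⊗ₜ T y - T y ⊗ₜ x)
        + (y ⊗ₜ T x - T x ⊗ₜ y) + ((q + 1) / 2) • (x ⊗ₜ y - y ⊗ₜ x))
    (R : V ⊗[k] V →ₗ[k] V ⊗[k] V) (hR : R = q • LinearMap.id - Y) :
    (R - q • LinearMap.id).comp (R + LinearMap.id) = 0 := by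
  have hYY : Y * Y = (q + 1) • Y :=
    mul_self_eq_smul_of_mul_sub_eq_smul hchar (comm_comp_eq_neg_of_apply_tmul hY)
      (comp_sub_comm_eq_smul_of_apply_tmul hchar hg hY)
  subst hR
  exact hecke_of_mul_self_eq_smul hYY

theorem stmt14 (k V : Type*) [Field k] [AddCommGroup V] [Module k V]
    [FiniteDimensional k V] (hdim : finrank k V = 3) (hchar : (2 : k) ≠ 0)
    (q : k) (hq : q ≠ 0) (a b : V)
    (g : LinearMap.BilinForm k V) (hg : g.IsSymm)
    (hΔ : (q - 1) ^ 2 = -(4 * (g a a * g b b - g a b ^ 2)))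
    (T : V →ₗ[k] V) (hT : ∀ v, T v = g b v • a - g a v • b)
    (Y : V ⊗[k] V →ₗ[k] V ⊗[k] V)
    (hY : ∀ x y : V, Y (x ⊗ₜ y) =
      g x y • (a ⊗ₜ b - b ⊗ₜ a) + (x ⊗ₜ T y - T y ⊗ₜ x)
        + (y ⊗ₜ T x - T x ⊗ₜ y) + ((q + 1) / 2) • (x ⊗ₜ y - y ⊗ₜ x))
    (R : V ⊗[k] V →ₗ[k] V ⊗[k] V) (hR : R = q • LinearMap.id - Y) :
    (R - q • LinearMap.id).comp (R + LinearMap.id) = 0 :=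
  stmt14_general k V hchar q a b g hg T Y hY R hR
end

section
/- Let Y be an operator on V⊗V (dim V = 3) with image in the alternating 2-tensors Alt₂, satisfying Y|_{Alt₂} = (q+1)·Id and ((Id⊗Y)(Y⊗Id) − q·Id)(V⊗Alt₂) ⊆ Alt₃, where q ≠ 0. Then also ((Y⊗Id)(Id⊗Y) − q·Id)(Alt₂⊗V) ⊆ Alt₃. -/
open Module TensorProduct

theorem stmt16 (k V : Type*) [Field k] [AddCommGroup V] [Module k V]
    [FiniteDimensional k V] (hdim : finrank k V = 3)
    (q : k) (hq : q ≠ 0)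
    (Alt2 : Submodule k (V ⊗[k] V))
    (hAlt2 : Alt2 = Submodule.span k {w : V ⊗[k] V | ∃ x y : V, w = x ⊗ₜ y - y ⊗ₜ x})
    (VAlt2 Alt2V Alt3 : Submodule k (V ⊗[k] (V ⊗[k] V)))
    (hVAlt2 : VAlt2 = Submodule.span k
      {w | ∃ x y z : V, w = x ⊗ₜ (y ⊗ₜ z - z ⊗ₜ y)})
    (hAlt2V : Alt2V = Submodule.span k
      {w | ∃ x y z : V, w = x ⊗ₜ (y ⊗ₜ z) - y ⊗ₜ (x ⊗ₜ z)})
    (hAlt3 : Alt3 = Submodule.span k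
      {w | ∃ x y z : V, w = x ⊗ₜ (y ⊗ₜ z) + y ⊗ₜ (z ⊗ₜ x) + z ⊗ₜ (x ⊗ₜ y)
        - z ⊗ₜ (y ⊗ₜ x) - x ⊗ₜ (z ⊗ₜ y) - y ⊗ₜ (x ⊗ₜ z)})
    (Y : V ⊗[k] V →ₗ[k] V ⊗[k] V)
    (hYrange : LinearMap.range Y ≤ Alt2)
    (hYAlt : ∀ w ∈ Alt2, Y w = (q + 1) • w)
    (Y₁ Y₂ : V ⊗[k] (V ⊗[k] V) →ₗ[k] V ⊗[k] (V ⊗[k] V))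
    (hY₁ : Y₁ = (TensorProduct.assoc k V V V).toLinearMap
        ∘ₗ TensorProduct.map Y LinearMap.id
        ∘ₗ (TensorProduct.assoc k V V V).symm.toLinearMap)
    (hY₂ : Y₂ = TensorProduct.map LinearMap.id Y)
    (hbraid : ∀ w ∈ VAlt2, Y₂ (Y₁ w) - q • w ∈ Alt3) :
    ∀ w ∈ Alt2V, Y₁ (Y₂ w) - q • w ∈ Alt3 := by
  classical
  -- generator membership helpers
  have hgen2 : ∀ x y : V, x ⊗ₜ[k] y - y ⊗ₜ[k] x ∈ Alt2 := by
    intro x y; rw [hAlt2]; exact Submodule.subset_span ⟨x, y, rfl⟩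
  have hgenV2 : ∀ x y z : V, x ⊗ₜ[k] (y ⊗ₜ[k] z - z ⊗ₜ[k] y) ∈ VAlt2 := by
    intro x y z; rw [hVAlt2]; exact Submodule.subset_span ⟨x, y, z, rfl⟩
  have hgen2V : ∀ x y z : V, x ⊗ₜ[k] (y ⊗ₜ[k] z) - y ⊗ₜ[k] (x ⊗ₜ[k] z) ∈ Alt2V := by
    intro x y z; rw [hAlt2V]; exact Submodule.subset_span ⟨x, y, z, rfl⟩
  -- pointwise formula for Y₁
  have hY1app : ∀ (x y z : V),
      Y₁ (x ⊗ₜ (y ⊗ₜ z)) = (TensorProduct.assoc k V V V) (Y (x ⊗ₜ y) ⊗ₜ z) := by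
    intro x y z
    simp [hY₁]
  have hY2app : ∀ (x : V) (t : V ⊗[k] V), Y₂ (x ⊗ₜ t) = x ⊗ₜ (Y t) := by
    intro x t; simp [hY₂]
  -- range facts
  have L1 : ∀ (z : V) (s : V ⊗[k] V), s ∈ Alt2 →
      (TensorProduct.assoc k V V V) (s ⊗ₜ z) ∈ Alt2V := by
    intro z s hs
    rw [hAlt2] at hs
    induction hs using Submodule.span_induction with
    | mem s hs =>
      obtain ⟨x, y, rfl⟩ := hs
      have : (TensorProduct.assoc k V V V) ((x ⊗ₜ[k] y - y ⊗ₜ[k] x) ⊗ₜ[k] z)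
          = x ⊗ₜ[k] (y ⊗ₜ[k] z) - y ⊗ₜ[k] (x ⊗ₜ[k] z) := by
        simp [TensorProduct.sub_tmul]
      rw [this]; exact hgen2V x y z
    | zero => simp
    | add a b _ _ ha hb => rw [TensorProduct.add_tmul, map_add]; exact add_mem ha hb
    | smul r a _ ha => rw [← TensorProduct.smul_tmul', map_smul]; exact Submodule.smul_mem _ _ ha
  have L2 : ∀ (x : V) (s : V ⊗[k] V), s ∈ Alt2 → x ⊗ₜ s ∈ VAlt2 := by
    intro x s hs
    rw [hAlt2] at hs
    induction hs using Submodule.span_induction with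
    | mem s hs => obtain ⟨u, v, rfl⟩ := hs; exact hgenV2 x u v
    | zero => simp
    | add a b _ _ ha hb => rw [TensorProduct.tmul_add]; exact add_mem ha hb
    | smul r a _ ha => rw [TensorProduct.tmul_smul]; exact Submodule.smul_mem _ _ ha
  have hY1mem : ∀ w, Y₁ w ∈ Alt2V := by
    intro w
    induction w using TensorProduct.induction_on with
    | zero => simp
    | tmul x t =>
      induction t using TensorProduct.induction_on with
      | zero => simp
      | tmul y z => rw [hY1app]; exact L1 z _ (hYrange ⟨x ⊗ₜ y, rfl⟩)
      | add t1 t2 h1 h2 => rw [TensorProduct.tmul_add, map_add]; exact add_mem h1 h2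
    | add w1 w2 h1 h2 => rw [map_add]; exact add_mem h1 h2
  have hY2mem : ∀ w, Y₂ w ∈ VAlt2 := by
    intro w
    induction w using TensorProduct.induction_on with
    | zero => simp
    | tmul x t => rw [hY2app]; exact L2 x _ (hYrange ⟨t, rfl⟩)
    | add w1 w2 h1 h2 => rw [map_add]; exact add_mem h1 h2

  have hY2Alt3 : ∀ a ∈ Alt3, Y₂ a = (q + 1) • a := by
    intro a ha
    rw [hAlt3] at ha
    induction ha using Submodule.span_induction with
    | mem a hmem =>
      obtain ⟨x, y, z, rfl⟩ := hmem
      have hrw : x ⊗ₜ[k] (y ⊗ₜ[k] z) + y ⊗ₜ[k] (z ⊗ₜ[k] x) + z ⊗ₜ[k] (x ⊗ₜ[k] y)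
          - z ⊗ₜ[k] (y ⊗ₜ[k] x) - x ⊗ₜ[k] (z ⊗ₜ[k] y) - y ⊗ₜ[k] (x ⊗ₜ[k] z)
          = x ⊗ₜ[k] (y ⊗ₜ[k] z - z ⊗ₜ[k] y) + y ⊗ₜ[k] (z ⊗ₜ[k] x - x ⊗ₜ[k] z)
            + z ⊗ₜ[k] (x ⊗ₜ[k] y - y ⊗ₜ[k] x) := by
        simp only [TensorProduct.tmul_sub]; abel
      rw [hrw, map_add, map_add, hY2app, hY2app, hY2app,
        hYAlt _ (hgen2 y z), hYAlt _ (hgen2 z x), hYAlt _ (hgen2 x y),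
        TensorProduct.tmul_smul, TensorProduct.tmul_smul, TensorProduct.tmul_smul,
        ← smul_add, ← smul_add]
    | zero => simp
    | add a b _ _ ha hb => rw [map_add, ha, hb, smul_add]
    | smul r a _ ha => rw [map_smul, ha, smul_comm]
  have hY1Alt3 : ∀ a ∈ Alt3, Y₁ a = (q + 1) • a := by
    intro a ha
    rw [hAlt3] at ha
    induction ha using Submodule.span_induction with
    | mem a hmem =>
      obtain ⟨x, y, z, rfl⟩ := hmem
      set u : (V ⊗[k] V) ⊗[k] V :=
        (x ⊗ₜ[k] y - y ⊗ₜ[k] x) ⊗ₜ[k] z + (y ⊗ₜ[k] z - z ⊗ₜ[k] y) ⊗ₜ[k] x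
          + (z ⊗ₜ[k] x - x ⊗ₜ[k] z) ⊗ₜ[k] y with hu
      have hrw : x ⊗ₜ[k] (y ⊗ₜ[k] z) + y ⊗ₜ[k] (z ⊗ₜ[k] x) + z ⊗ₜ[k] (x ⊗ₜ[k] y)
          - z ⊗ₜ[k] (y ⊗ₜ[k] x) - x ⊗ₜ[k] (z ⊗ₜ[k] y) - y ⊗ₜ[k] (x ⊗ₜ[k] z)
          = (TensorProduct.assoc k V V V) u := by
        rw [hu]
        simp only [map_add, TensorProduct.sub_tmul, map_sub, TensorProduct.assoc_tmul]
        abel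
      have hmap : TensorProduct.map Y LinearMap.id u = (q + 1) • u := by
        rw [hu]
        simp only [map_add, TensorProduct.map_tmul, LinearMap.id_coe, id_eq,
          hYAlt _ (hgen2 x y), hYAlt _ (hgen2 y z), hYAlt _ (hgen2 z x),
          TensorProduct.smul_tmul', smul_add]
      rw [hrw, hY₁]
      simp only [LinearMap.coe_comp, Function.comp_apply, LinearEquiv.coe_coe,
        LinearEquiv.symm_apply_apply]
      rw [hmap, map_smul]
    | zero => simp
    | add a b _ _ ha hb => rw [map_add, ha, hb, smul_add]
    | smul r a _ ha => rw [map_smul, ha, smul_comm]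

  have hgen3 : ∀ x y z : V,
      x ⊗ₜ[k] (y ⊗ₜ[k] z) + y ⊗ₜ[k] (z ⊗ₜ[k] x) + z ⊗ₜ[k] (x ⊗ₜ[k] y)
        - z ⊗ₜ[k] (y ⊗ₜ[k] x) - x ⊗ₜ[k] (z ⊗ₜ[k] y) - y ⊗ₜ[k] (x ⊗ₜ[k] z) ∈ Alt3 := by
    intro x y z; rw [hAlt3]; exact Submodule.subset_span ⟨x, y, z, rfl⟩
  -- the cyclic rotation equivalence
  let c : V ⊗[k] (V ⊗[k] V) ≃ₗ[k] V ⊗[k] (V ⊗[k] V) :=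
    (TensorProduct.comm k V (V ⊗[k] V)) ≪≫ₗ (TensorProduct.assoc k V V V)
  have hcapp : ∀ x y z : V, c (x ⊗ₜ[k] (y ⊗ₜ[k] z)) = y ⊗ₜ[k] (z ⊗ₜ[k] x) := by
    intro x y z
    simp [c, TensorProduct.comm_tmul, TensorProduct.assoc_tmul]
  have hcV2 : VAlt2.map (c : V ⊗[k] (V ⊗[k] V) →ₗ[k] V ⊗[k] (V ⊗[k] V)) = Alt2V := by
    apply le_antisymm
    · rw [hVAlt2, Submodule.map_span, Submodule.span_le]
      rintro _ ⟨_, ⟨x, y, z, rfl⟩, rfl⟩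
      have : (c : V ⊗[k] (V ⊗[k] V) →ₗ[k] V ⊗[k] (V ⊗[k] V))
            (x ⊗ₜ[k] (y ⊗ₜ[k] z - z ⊗ₜ[k] y))
          = y ⊗ₜ[k] (z ⊗ₜ[k] x) - z ⊗ₜ[k] (y ⊗ₜ[k] x) := by
        rw [TensorProduct.tmul_sub, map_sub]
        simp only [LinearEquiv.coe_coe, hcapp]
      rw [this]
      exact hgen2V y z x
    · rw [hAlt2V, Submodule.span_le]
      rintro _ ⟨x, y, z, rfl⟩
      refine ⟨z ⊗ₜ[k] (x ⊗ₜ[k] y - y ⊗ₜ[k] x), hgenV2 z x y, ?_⟩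
      rw [TensorProduct.tmul_sub, map_sub]
      simp only [LinearEquiv.coe_coe, hcapp]
  have hcbig : ∀ x y z : V,
      (c : V ⊗[k] (V ⊗[k] V) →ₗ[k] V ⊗[k] (V ⊗[k] V))
          (x ⊗ₜ[k] (y ⊗ₜ[k] z) + y ⊗ₜ[k] (z ⊗ₜ[k] x) + z ⊗ₜ[k] (x ⊗ₜ[k] y)
            - z ⊗ₜ[k] (y ⊗ₜ[k] x) - x ⊗ₜ[k] (z ⊗ₜ[k] y) - y ⊗ₜ[k] (x ⊗ₜ[k] z))
        = x ⊗ₜ[k] (y ⊗ₜ[k] z) + y ⊗ₜ[k] (z ⊗ₜ[k] x) + z ⊗ₜ[k] (x ⊗ₜ[k] y)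
            - z ⊗ₜ[k] (y ⊗ₜ[k] x) - x ⊗ₜ[k] (z ⊗ₜ[k] y) - y ⊗ₜ[k] (x ⊗ₜ[k] z) := by
    intro x y z
    simp only [map_add, map_sub, LinearEquiv.coe_coe, hcapp]
    abel
  have hcA3 : Alt3.map (c : V ⊗[k] (V ⊗[k] V) →ₗ[k] V ⊗[k] (V ⊗[k] V)) = Alt3 := by
    apply le_antisymm
    · nth_rewrite 1 [hAlt3]
      rw [Submodule.map_span, Submodule.span_le]
      rintro _ ⟨_, ⟨x, y, z, rfl⟩, rfl⟩
      rw [hcbig]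
      exact hgen3 x y z
    · nth_rewrite 1 [hAlt3]
      rw [Submodule.span_le]
      rintro _ ⟨x, y, z, rfl⟩
      exact ⟨_, hgen3 x y z, hcbig x y z⟩
  -- quotient setup
  have hY1c3 : Alt3 ≤ Alt3.comap Y₁ := by
    intro a ha
    simp only [Submodule.mem_comap]
    rw [hY1Alt3 a ha]
    exact Submodule.smul_mem _ _ ha
  let Yb : (V ⊗[k] (V ⊗[k] V)) ⧸ Alt3 →ₗ[k] (V ⊗[k] (V ⊗[k] V)) ⧸ Alt3 :=
    Submodule.mapQ Alt3 Alt3 Y₁ hY1c3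
  let A := VAlt2.map Alt3.mkQ
  let B := Alt2V.map Alt3.mkQ
  have hYbAB : ∀ x ∈ A, Yb x ∈ B := by
    rintro _ ⟨v, hv, rfl⟩
    exact ⟨Y₁ v, hY1mem v, rfl⟩
  let h : A →ₗ[k] B := Yb.restrict hYbAB
  have hinj : Function.Injective h := by
    rw [← LinearMap.ker_eq_bot]
    apply (Submodule.eq_bot_iff _).mpr
    rintro ⟨x, hxA⟩ hker
    obtain ⟨v, hv, rfl⟩ := hxA
    have hY1v : Y₁ v ∈ Alt3 := by
      have h0 : Yb (Alt3.mkQ v) = 0 := congrArg Subtype.val hker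
      rwa [show Yb (Alt3.mkQ v) = Alt3.mkQ (Y₁ v) from rfl,
        Submodule.mkQ_apply, Submodule.Quotient.mk_eq_zero] at h0
    have h1 : Y₂ (Y₁ v) ∈ Alt3 := by
      rw [hY2Alt3 _ hY1v]; exact Submodule.smul_mem _ _ hY1v
    have h3 : q • v ∈ Alt3 := by
      have := sub_mem h1 (hbraid v hv)
      simpa using this
    have h4 : v ∈ Alt3 := by rwa [Submodule.smul_mem_iff _ hq] at h3
    refine Subtype.ext ?_
    show Alt3.mkQ v = (0 : (V ⊗[k] (V ⊗[k] V)) ⧸ Alt3)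
    rw [Submodule.mkQ_apply, Submodule.Quotient.mk_eq_zero]
    exact h4
  let e3 : ((V ⊗[k] (V ⊗[k] V)) ⧸ Alt3) ≃ₗ[k] ((V ⊗[k] (V ⊗[k] V)) ⧸ Alt3) :=
    Submodule.Quotient.equiv Alt3 Alt3 c hcA3
  have hcomp : (e3 : (V ⊗[k] (V ⊗[k] V)) ⧸ Alt3 →ₗ[k] (V ⊗[k] (V ⊗[k] V)) ⧸ Alt3) ∘ₗ Alt3.mkQ
      = Alt3.mkQ ∘ₗ (c : V ⊗[k] (V ⊗[k] V) →ₗ[k] V ⊗[k] (V ⊗[k] V)) := by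
    ext x
    rfl
  have hAB : A.map (e3 : (V ⊗[k] (V ⊗[k] V)) ⧸ Alt3 →ₗ[k] (V ⊗[k] (V ⊗[k] V)) ⧸ Alt3) = B := by
    show (VAlt2.map Alt3.mkQ).map _ = Alt2V.map Alt3.mkQ
    rw [← Submodule.map_comp, hcomp, Submodule.map_comp, hcV2]
  have hfr : finrank k A = finrank k B := by
    rw [← hAB, LinearEquiv.finrank_map_eq]
  have hsurj : Function.Surjective h :=
    (LinearMap.injective_iff_surjective_of_finrank_eq_finrank hfr).mp hinj
  -- final argument
  intro w hw
  obtain ⟨⟨x, hxA⟩, hx⟩ := hsurj ⟨Alt3.mkQ w, ⟨w, hw, rfl⟩⟩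
  obtain ⟨v, hv, rfl⟩ := hxA
  have hx' : Alt3.mkQ (Y₁ v) = Alt3.mkQ w := congrArg Subtype.val hx
  have ha : w - Y₁ v ∈ Alt3 := by
    rw [Submodule.mkQ_apply, Submodule.mkQ_apply] at hx'
    exact (Submodule.Quotient.eq _).mp hx'.symm
  have hsplit : Y₁ (Y₂ w) - q • w
      = Y₁ (Y₂ (Y₁ v) - q • v) + (Y₁ (Y₂ (w - Y₁ v)) - q • (w - Y₁ v)) := by
    simp only [map_sub, map_smul, smul_sub]
    abel
  rw [hsplit]
  apply add_mem
  · have hb := hbraid v hv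
    rw [hY1Alt3 _ hb]
    exact Submodule.smul_mem _ _ hb
  · rw [hY2Alt3 _ ha, map_smul, hY1Alt3 _ ha]
    exact sub_mem (Submodule.smul_mem _ _ (Submodule.smul_mem _ _ ha)) (Submodule.smul_mem _ _ ha)
end
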